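/- arXiv:1712.06484 — 2 statements merged into one kernel-verified Lean document; each statement's English description precedes it below -/
import Mathlib

section
/- Let F be a field of prime characteristic p, let L be a Lie algebra over F, let V be an F-vector space, and let ρ : L → End_F(V) be a Lie algebra homomorphism (a representation of L on V). Let e ∈ L satisfy the over-restricted condition ρ(e)^{⌊(p+1)/2⌋} = 0, and define Y(t) = Σ_{k=0}^{p-1} (t^k / k!) · ρ(e)^{k} ∈ End_F(V) for t ∈ F. Then for every x ∈ L and t ∈ F: Σ_{k=0}^{p-1} (t^k / k!) · ρ( (ad e)^k (x) ) = Y(t) ∘ ρ(x) ∘ Y(-t), where ad e : L → L is the adjoint action y ↦ ⁅e, y⁆ of the Lie algebra L. -/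
/-!
Write `a = ρ e`. Since `ρ` intertwines `ad e` with `ad a = L_a - R_a` on `End_F V`, the left side
is the truncated exponential of `t (L_a - R_a)` applied to `ρ x`. The operators `L_a` and `-R_a`
commute and their `⌊(p+1)/2⌋`-th powers vanish, so every monomial `L_a^i R_a^j` of degree `≥ p`
is zero; hence the truncated exponential is multiplicative on them, exactly like the true
exponential, and splits into left multiplication by `Y(t)` and right multiplication by `Y(-t)`.
-/

open Finset Nat LinearMap

attribute [local instance 100] LieRing.ofAssociativeRing

section TruncExp

variable {F B : Type*} [Field F] [Ring B] [Algebra F B]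

def truncExp (N : ℕ) (t : F) (u : B) : B :=
  ∑ k ∈ range N, (t ^ k / (k ! : F)) • u ^ k

lemma pow_div_factorial_mul_choose (t : F) (i j : ℕ) (h : ((i + j)! : F) ≠ 0) :
    t ^ (i + j) / ((i + j)! : F) * ((i + j).choose i : F) =
      t ^ i / (i ! : F) * (t ^ j / (j ! : F)) := by
  have hc : ((i + j).choose i : F) * (i ! : F) * (j ! : F) = ((i + j)! : F) := by
    have hnat := Nat.add_choose_mul_factorial_mul_factorial i j
    rw [← Nat.choose_symm_add] at hnat
    rw [← Nat.cast_mul, ← Nat.cast_mul, hnat]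
  have hi : (i ! : F) ≠ 0 := fun h0 => h (by rw [← hc, h0]; ring)
  have hj : (j ! : F) ≠ 0 := fun h0 => h (by rw [← hc, h0]; ring)
  field_simp
  rw [pow_add]
  linear_combination (t ^ i * t ^ j) * hc

theorem truncExp_add_of_commute {N m n : ℕ} (t : F) {u v : B} (huv : Commute u v)
    (hu : u ^ m = 0) (hv : v ^ n = 0) (hmn : m + n ≤ N + 1)
    (hN : ∀ k < N, (k ! : F) ≠ 0) :
    truncExp N t (u + v) = truncExp N t u * truncExp N t v := by
  set c : ℕ → F := fun k => t ^ k / (k ! : F)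
  have hvanish : ∀ i j, N ≤ i + j → u ^ i * v ^ j = 0 := by
    intro i j hij
    rcases le_or_gt m i with hi | hi
    · rw [pow_eq_zero_of_le hi hu, zero_mul]
    · rw [pow_eq_zero_of_le (by omega) hv, mul_zero]
  calc truncExp N t (u + v)
      = ∑ k ∈ range N, ∑ i ∈ range (k + 1), (c i * c (k - i)) • (u ^ i * v ^ (k - i)) := by
        refine sum_congr rfl fun k hk => ?_
        rw [huv.add_pow, smul_sum]
        refine sum_congr rfl fun i hi => ?_
        obtain ⟨j, rfl⟩ := Nat.exists_eq_add_of_le (Nat.lt_succ_iff.mp (mem_range.mp hi))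
        rw [Nat.add_sub_cancel_left, ← Nat.cast_comm, ← nsmul_eq_mul,
          ← Nat.cast_smul_eq_nsmul F, smul_smul, pow_div_factorial_mul_choose t i j
            (hN _ (mem_range.mp hk))]
    _ = ∑ i ∈ range N, ∑ j ∈ range (N - i), (c i * c j) • (u ^ i * v ^ j) :=
        sum_range_diag_flip N fun i j => (c i * c j) • (u ^ i * v ^ j)
    _ = ∑ i ∈ range N, ∑ j ∈ range N, (c i * c j) • (u ^ i * v ^ j) := by
        refine sum_congr rfl fun i hi => sum_subset (range_subset_range.2 (Nat.sub_le N i)) ?_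
        intro j _ hj
        rw [hvanish i j (by simp only [Finset.mem_range] at hj; omega), smul_zero]
    _ = truncExp N t u * truncExp N t v := by
        simp only [truncExp, sum_mul_sum, smul_mul_smul, c]

lemma truncExp_neg (N : ℕ) (t : F) (u : B) : truncExp N t (-u) = truncExp N (-t) u := by
  refine sum_congr rfl fun k _ => ?_
  rw [← neg_one_smul F u, smul_pow, smul_smul, neg_pow t]
  ring_nf

end TruncExp

section MulLeftRight

variable {F A : Type*} [Field F] [Ring A] [Algebra F A]

lemma truncExp_mulLeft_apply (N : ℕ) (t : F) (a x : A) :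
    truncExp N t (mulLeft F a) x = truncExp N t a * x := by
  simp only [truncExp, LinearMap.sum_apply, LinearMap.smul_apply, pow_mulLeft, mulLeft_apply,
    sum_mul, smul_mul_assoc]

lemma truncExp_mulRight_apply (N : ℕ) (t : F) (a x : A) :
    truncExp N t (mulRight F a) x = x * truncExp N t a := by
  simp only [truncExp, LinearMap.sum_apply, LinearMap.smul_apply, pow_mulRight, mulRight_apply,
    mul_sum, mul_smul_comm]

lemma iterate_lie_eq_pow_mulLeft_sub_mulRight_apply (a x : A) (k : ℕ) :
    (fun y => ⁅a, y⁆)^[k] x = ((mulLeft F a - mulRight F a) ^ k) x := by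
  have had := congrFun (LieAlgebra.ad_eq_lmul_left_sub_lmul_right (R := F) A) a
  rw [Pi.sub_apply] at had
  rw [← had, Module.End.pow_apply]
  rfl

end MulLeftRight

/-- Let `ρ : L → End_F V` be a representation of a Lie algebra `L` over a field `F` of
prime characteristic `p`, and let `e ∈ L` satisfy the over-restricted condition
`ρ(e)^{⌊(p+1)/2⌋} = 0`. With `Y(t) = ∑_{k=0}^{p-1} (t^k/k!) ρ(e)^k`, for every `x ∈ L`
and `t ∈ F` one has `∑_{k=0}^{p-1} (t^k/k!) ρ((ad e)^k x) = Y(t) ∘ ρ(x) ∘ Y(-t)`. -/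
theorem rep_truncExp_ad_eq_conj {F : Type*} [Field F] (p : ℕ) [Fact p.Prime] [CharP F p]
    {L : Type*} [LieRing L] [LieAlgebra F L]
    {V : Type*} [AddCommGroup V] [Module F V]
    (ρ : L →ₗ⁅F⁆ Module.End F V) (e : L)
    (he : (ρ e) ^ ((p + 1) / 2) = 0) (x : L) (t : F) :
    ∑ k ∈ Finset.range p, (t ^ k / (k.factorial : F)) • ρ ((fun y => ⁅e, y⁆)^[k] x) =
      (∑ k ∈ Finset.range p, (t ^ k / (k.factorial : F)) • (ρ e) ^ k) * ρ x *
        (∑ k ∈ Finset.range p, ((-t) ^ k / (k.factorial : F)) • (ρ e) ^ k) := by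
  set a := ρ e
  have hfact : ∀ k < p, (k ! : F) ≠ 0 := fun k hk =>
    ((IsUnit.natCast_factorial_iff_of_charP p).2 hk).ne_zero
  have hL : mulLeft F a ^ ((p + 1) / 2) = 0 := by rw [pow_mulLeft, he, mulLeft_zero_eq_zero]
  have hR : (-mulRight F a : Module.End F (Module.End F V)) ^ ((p + 1) / 2) = 0 := by
    -- a bare `rw [neg_pow]` does not see through the `Neg` instance of linear maps
    rw [(neg_pow (mulRight F a) _ :), pow_mulRight, he, mulRight_zero_eq_zero, mul_zero]
  have hmul := truncExp_add_of_commute (N := p) t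
    (commute_mulLeft_right (R := F) a a).neg_right hL hR (by omega) hfact
  have hiterate :
      ∀ k, ρ ((fun y => ⁅e, y⁆)^[k] x) = ((mulLeft F a + -mulRight F a) ^ k) (ρ x) := by
    intro k
    have hsemiconj : Function.Semiconj ρ (fun y => ⁅e, y⁆) (fun Y => ⁅a, Y⁆) := ρ.map_lie e
    rw [hsemiconj.iterate_right, iterate_lie_eq_pow_mulLeft_sub_mulRight_apply (F := F),
      sub_eq_add_neg]
  calc _ = truncExp p t (mulLeft F a + -mulRight F a) (ρ x) := by
        simp only [truncExp, LinearMap.sum_apply, LinearMap.smul_apply, hiterate]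
    _ = truncExp p t a * ρ x * truncExp p (-t) a := by
        rw [hmul, Module.End.mul_apply, truncExp_neg, truncExp_mulRight_apply,
          truncExp_mulLeft_apply, mul_assoc]
end

section
/- Let F be a field of prime characteristic p, A an associative F-algebra, and e, x ∈ A with e^{⌊(p+1)/2⌋} = 0. Then Σ_{k=0}^{p-1} (1/k!) · (ad e)^k (x) = Σ_{i=0}^{p-1} Σ_{j=0}^{p-1} ((-1)^j / (i! · j!)) · e^{i} · x · e^{j}; that is, the truncated exponential of ad e applied to x equals the full double sum over the square [0, p-1] × [0, p-1]. -/
/-!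
Since left and right multiplication by `e` commute, the binomial theorem expands
`(ad e)^k x = (L_e - R_e)^k x` as `∑_{i+j=k} (-1)^j C(k,i) e^i x e^j`; for `k < p` the factorial
`k!` is invertible and `C(k,i)/k! = 1/(i! j!)`. Summing over `k < p` therefore gives the double sum
over the triangle `i + j < p`. The remaining terms of the square vanish: if `i + j ≥ p` then
`i` or `j` is at least `⌊(p+1)/2⌋`, so `e^i x e^j = 0`.
-/

open Finset

theorem iterate_ad_apply_eq_sum {A : Type*} [Ring A] (e x : A) (k : ℕ) :
    (fun y => e * y - y * e)^[k] x =
      ∑ i ∈ range (k + 1),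
        ((-1 : ℤ) ^ (k - i) * k.choose i) • (e ^ i * x * e ^ (k - i)) := by
  have hcomm : Commute (LinearMap.mulLeft ℤ e) ((-1 : ℤ) • LinearMap.mulRight ℤ e) :=
    (LinearMap.commute_mulLeft_right e e).smul_right _
  have had : (fun y => e * y - y * e) =
      ⇑(LinearMap.mulLeft ℤ e + (-1 : ℤ) • LinearMap.mulRight ℤ e) := by
    funext y; simp [sub_eq_add_neg]
  rw [had, ← Module.End.pow_apply, hcomm.add_pow, LinearMap.sum_apply]
  refine sum_congr rfl fun i _ => ?_
  rw [smul_pow]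
  simp only [Module.End.mul_apply, LinearMap.pow_mulLeft, LinearMap.pow_mulRight,
    Module.End.natCast_apply, LinearMap.mulLeft_apply, LinearMap.mulRight_apply, mul_smul,
    LinearMap.smul_apply]
  rw [mul_smul_comm, smul_mul_assoc, mul_smul_comm, natCast_zsmul, mul_assoc]

theorem inv_factorial_mul_choose {F : Type*} [DivisionSemiring F] {k i : ℕ}
    (hk : (k.factorial : F) ≠ 0) (hik : i ≤ k) :
    (k.factorial : F)⁻¹ * k.choose i = ((i.factorial : F) * (k - i).factorial)⁻¹ := by
  have hfac : (k.choose i : F) * (i.factorial * (k - i).factorial) = k.factorial := by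
    rw [← mul_assoc]
    exact_mod_cast congrArg Nat.cast (Nat.choose_mul_factorial_mul_factorial hik)
  have hne : ((i.factorial : F) * (k - i).factorial) ≠ 0 := right_ne_zero_of_mul (hfac ▸ hk)
  rw [inv_mul_eq_iff_eq_mul₀ hk, ← hfac, mul_inv_cancel_right₀ hne]

theorem CharP.cast_factorial_ne_zero_of_lt {F : Type*} [Field F] (p : ℕ) [Fact p.Prime]
    [CharP F p] {k : ℕ} (hk : k < p) : (k.factorial : F) ≠ 0 := by
  rw [Ne, CharP.cast_eq_zero_iff F p, (Fact.out : p.Prime).dvd_factorial]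
  omega

theorem pow_mul_mul_pow_eq_zero {A : Type*} [MonoidWithZero A] {e : A} {m : ℕ} (he : e ^ m = 0)
    (x : A) {i j : ℕ} (hij : 2 * m ≤ i + j + 1) : e ^ i * x * e ^ j = 0 := by
  rcases le_or_gt m i with hi | hi
  · rw [pow_eq_zero_of_le hi he, zero_mul, zero_mul]
  · rw [pow_eq_zero_of_le (show m ≤ j by omega) he, mul_zero]

theorem sum_range_diag_eq_sum_square {M : Type*} [AddCommMonoid M] (n : ℕ) (f : ℕ → ℕ → M)
    (hf : ∀ i j, n ≤ i + j → f i j = 0) :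
    ∑ k ∈ range n, ∑ i ∈ range (k + 1), f i (k - i) =
      ∑ i ∈ range n, ∑ j ∈ range n, f i j := by
  rw [sum_range_diag_flip]
  refine sum_congr rfl fun i _ =>
    sum_subset (range_subset_range.2 (Nat.sub_le n i)) fun j _ hj => hf i j ?_
  simp only [mem_range] at hj
  omega

/-- Under the over-restricted condition `e^{⌊(p+1)/2⌋} = 0`, the truncated exponential of
`ad e` applied to `x` equals the full double sum over the square `[0,p-1] × [0,p-1]`:
`∑_{k=0}^{p-1} (1/k!) (ad e)^k (x) = ∑_{i,j=0}^{p-1} ((-1)^j/(i! j!)) e^i x e^j`. -/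
theorem truncExp_ad_eq_square_sum {F : Type*} [Field F] (p : ℕ) [Fact p.Prime]
    [CharP F p] {A : Type*} [Ring A] [Algebra F A] (e x : A)
    (he : e ^ ((p + 1) / 2) = 0) :
    ∑ k ∈ Finset.range p, ((k.factorial : F)⁻¹) • (fun y => e * y - y * e)^[k] x =
      ∑ i ∈ Finset.range p, ∑ j ∈ Finset.range p,
        ((-1 : F) ^ j / ((i.factorial : F) * (j.factorial : F))) •
          (e ^ i * x * e ^ j) := by
  have hvanish : ∀ i j, p ≤ i + j →
      ((-1 : F) ^ j / ((i.factorial : F) * (j.factorial : F))) • (e ^ i * x * e ^ j) = 0 :=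
    fun i j hij => by rw [pow_mul_mul_pow_eq_zero he x (by omega), smul_zero]
  rw [← sum_range_diag_eq_sum_square p _ hvanish]
  refine sum_congr rfl fun k hk => ?_
  rw [iterate_ad_apply_eq_sum, smul_sum]
  refine sum_congr rfl fun i hi => ?_
  rw [mem_range] at hk hi
  rw [← Int.cast_smul_eq_zsmul F, smul_smul]
  push_cast
  rw [mul_left_comm, div_eq_mul_inv,
    inv_factorial_mul_choose (CharP.cast_factorial_ne_zero_of_lt p hk) (by omega)]
end
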